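/- Let G be a simple graph and x, y non-adjacent vertices with N_G(x) ∩ N_G(y) = ∅, such that {x,y} is a genuine pair (no u,v outside {x,y} with G[{x,y,u,v}] ≅ 2K₂). Then the independence complex of G is contractible. -/

import Mathlib

/-- An abstract simplicial complex on the vertex type `V`. -/
structure SComplex (V : Type*) where
  faces : Set (Finset V)
  down_closed : ∀ ⦃s t : Finset V⦄, s ∈ faces → t ⊆ s → t ∈ faces

/-- The independence complex of a graph: faces are the (finite) independent sets. -/
def indComplex {V : Type*} (G : SimpleGraph V) : SComplex V where
  faces := {s : Finset V | ∀ a ∈ s, ∀ b ∈ s, ¬ G.Adj a b}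
  down_closed := fun s t hs hts a ha b hb => hs a (hts ha) b (hts hb)

/-- The geometric realization of an abstract simplicial complex, as a subspace of `V → ℝ`:
convex combinations of the vertices of a face. -/
def geomRealization {V : Type*} (K : SComplex V) : Set (V → ℝ) :=
  {f | (∀ v, 0 ≤ f v) ∧
    ∃ s ∈ K.faces, (∀ v, v ∉ s → f v = 0) ∧ ∑ v ∈ s, f v = 1}

/-- The induced subgraph of `G` on the four distinct vertices `a,b,c,d` is isomorphic to
`2K₂`, with matching edges `ab` and `cd`. -/
def IsInduced2K2On {V : Type*} (G : SimpleGraph V) (a b c d : V) : Prop :=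
  a ≠ b ∧ a ≠ c ∧ a ≠ d ∧ b ≠ c ∧ b ≠ d ∧ c ≠ d ∧
    G.Adj a b ∧ G.Adj c d ∧
    ¬ G.Adj a c ∧ ¬ G.Adj a d ∧ ¬ G.Adj b c ∧ ¬ G.Adj b d

/-- `{x,y}` is a genuine pair in `G`: non-adjacent distinct vertices such that no induced
`2K₂` of `G` uses both `x` and `y`. -/
def IsGenuinePair {V : Type*} (G : SimpleGraph V) (x y : V) : Prop :=
  x ≠ y ∧ ¬ G.Adj x y ∧
    ¬ ∃ u v : V, u ∉ ({x, y} : Set V) ∧ v ∉ ({x, y} : Set V) ∧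
      ∃ a b c d : V, ({a, b, c, d} : Set V) = {x, y, u, v} ∧ IsInduced2K2On G a b c d


/-!
Let `r` move the weight that a point `f` of the realization puts on `N(x)` onto the vertex `y`.
If the support of `f` meets `N(x)`, say at `u`, then every neighbour of `y` is adjacent to `u`
(this is where the genuine-pair condition and `N(x) ∩ N(y) = ∅` enter), so `y` has no neighbour
in the support of `f`, and `f`, `r f` lie in the common simplex `supp f ∪ {y}`; otherwise
`r f = f`. As `r f` vanishes on `N(x)`, the points `r f` and `x` lie in a common simplex as well,
and the two straight-line homotopies `id ≃ r ≃ const x` contract the realization.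
-/

open Finset

theorem finsum_mem_eq_sum_indicator {V : Type*} {f : V → ℝ} {t : Finset V}
    (ht : ∀ v ∉ t, f v = 0) (A : Set V) :
    ∑ᶠ v ∈ A, f v = ∑ v ∈ t, A.indicator f v := by
  rw [finsum_mem_def]
  refine finsum_eq_sum_of_support_subset _ fun v hv => ?_
  by_contra hvt
  simp [ht v hvt] at hv

theorem ContinuousMap.homotopic_of_segment_subset {Y E : Type*} [TopologicalSpace Y]
    [AddCommGroup E] [Module ℝ E] [TopologicalSpace E] [ContinuousAdd E] [ContinuousSMul ℝ E]
    {X : Set E} (F G : C(Y, X)) (h : ∀ y, segment ℝ (F y : E) (G y) ⊆ X) : F.Homotopic G :=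
  ⟨{ toFun := fun p => ⟨(1 - p.1 : ℝ) • (F p.2 : E) + (p.1 : ℝ) • (G p.2 : E),
        h p.2 ⟨_, _, sub_nonneg.2 p.1.2.2, p.1.2.1, sub_add_cancel 1 _, rfl⟩⟩
     continuous_toFun := by fun_prop
     map_zero_left := by simp
     map_one_left := by simp }⟩

namespace SComplex

variable {V : Type*} (K : SComplex V)

theorem sum_eq_one_of_mem_geomRealization {f : V → ℝ} (hf : f ∈ geomRealization K)
    {t : Finset V} (ht : ∀ v ∉ t, f v = 0) : ∑ v ∈ t, f v = 1 := by
  classical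
  obtain ⟨-, s, -, hs, hsum⟩ := hf
  rw [← hsum, sum_subset (subset_union_left (s₂ := s)) fun v _ hv => ht v hv,
    ← sum_subset (subset_union_right (s₁ := t)) fun v _ hv => hs v hv]

theorem exists_face_mem_iff_ne_zero {f : V → ℝ} (hf : f ∈ geomRealization K) :
    ∃ s ∈ K.faces, ∀ v, v ∈ s ↔ f v ≠ 0 := by
  classical
  obtain ⟨-, s, hs, hzero, -⟩ := hf
  refine ⟨s.filter (f · ≠ 0), K.down_closed hs (filter_subset _ _), fun v => ?_⟩
  simp only [mem_filter, and_iff_right_iff_imp]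
  exact fun hv => by_contra fun hvs => hv (hzero v hvs)

theorem single_mem_geomRealization [DecidableEq V] {x : V} (hx : {x} ∈ K.faces) :
    Pi.single x 1 ∈ geomRealization K := by
  refine ⟨fun v => ?_, {x}, hx, fun v hv => ?_, by simp⟩
  · by_cases hv : v = x <;> simp [hv]
  · simp [by simpa using hv]

theorem segment_subset_geomRealization {f g : V → ℝ} (hf : f ∈ geomRealization K)
    (hg : ∀ v, 0 ≤ g v) {s : Finset V} (hs : s ∈ K.faces) (hfs : ∀ v ∉ s, f v = 0)
    (hgs : ∀ v ∉ s, g v = 0) (hsum : ∑ v ∈ s, g v = 1) :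
    segment ℝ f g ⊆ geomRealization K := by
  rintro _ ⟨a, b, ha, hb, hab, rfl⟩
  refine ⟨fun v => ?_, s, hs, fun v hv => ?_, ?_⟩
  · have := hf.1 v
    have := hg v
    simp only [Pi.add_apply, Pi.smul_apply, smul_eq_mul]
    positivity
  · simp [hfs v hv, hgs v hv]
  · simp only [Pi.add_apply, Pi.smul_apply, smul_eq_mul, sum_add_distrib, ← mul_sum,
      K.sum_eq_one_of_mem_geomRealization hf hfs, hsum, mul_one, hab]

theorem finsum_mem_bounds {f : V → ℝ} (hf : f ∈ geomRealization K) (A : Set V)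
    (s : Finset V) :
    ∑ v ∈ s, A.indicator f v ≤ ∑ᶠ v ∈ A, f v ∧
      ∑ᶠ v ∈ A, f v ≤ 1 - ∑ v ∈ s, Aᶜ.indicator f v := by
  classical
  obtain ⟨hnonneg, t, -, ht, -⟩ := id hf
  have hst : ∀ v ∉ s ∪ t, f v = 0 := fun v hv => ht v fun h => hv (mem_union_right _ h)
  have hmono : ∀ B : Set V, ∑ v ∈ s, B.indicator f v ≤ ∑ v ∈ s ∪ t, B.indicator f v :=
    fun B => sum_le_sum_of_subset_of_nonneg subset_union_left fun v _ _ =>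
      Set.indicator_nonneg (fun v _ => hnonneg v) v
  have hsplit : ∑ v ∈ s ∪ t, A.indicator f v + ∑ v ∈ s ∪ t, Aᶜ.indicator f v = 1 := by
    rw [← sum_add_distrib, ← K.sum_eq_one_of_mem_geomRealization hf hst]
    simp_rw [Set.indicator_self_add_compl_apply]
  rw [finsum_mem_eq_sum_indicator hst]
  exact ⟨hmono A, by linarith [hmono Aᶜ]⟩

theorem continuous_finsum_mem (A : Set V) :
    Continuous fun f : geomRealization K => ∑ᶠ v ∈ A, (f : V → ℝ) v := by
  refine continuous_iff_continuousAt.2 fun f₀ => ?_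
  obtain ⟨-, s, -, hs, hsum⟩ := f₀.2
  have hcont : ∀ B : Set V,
      Continuous fun f : geomRealization K => ∑ v ∈ s, B.indicator (f : V → ℝ) v := by
    refine fun B => continuous_finsetSum _ fun v _ => ?_
    by_cases hv : v ∈ B
    · simp only [Set.indicator_of_mem hv]
      exact (continuous_apply v).comp continuous_subtype_val
    · simp only [Set.indicator_of_notMem hv]
      exact continuous_const
  have h_lower : ∑ᶠ v ∈ A, (f₀ : V → ℝ) v = ∑ v ∈ s, A.indicator (f₀ : V → ℝ) v :=
    finsum_mem_eq_sum_indicator hs A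
  have h_upper :
      ∑ᶠ v ∈ A, (f₀ : V → ℝ) v = 1 - ∑ v ∈ s, Aᶜ.indicator (f₀ : V → ℝ) v := by
    rw [h_lower, eq_sub_iff_add_eq, ← sum_add_distrib, ← hsum]
    simp_rw [Set.indicator_self_add_compl_apply]
  -- on `geomRealization K` the mass on `A` is squeezed between two functions of the
  -- finitely many coordinates in `s`, which agree at `f₀`
  refine tendsto_of_tendsto_of_tendsto_of_le_of_le ?_ ?_
    (fun f => (K.finsum_mem_bounds f.2 A s).1) (fun f => (K.finsum_mem_bounds f.2 A s).2)
  · dsimp only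
    rw [h_lower]
    exact (hcont A).continuousAt
  · dsimp only
    rw [h_upper]
    exact (continuous_const.sub (hcont Aᶜ)).continuousAt

end SComplex

section MoveMass

variable {V : Type*} [DecidableEq V]

noncomputable def moveMass (A : Set V) (y : V) (f : V → ℝ) : V → ℝ :=
  Aᶜ.indicator f + Pi.single y (∑ᶠ v ∈ A, f v)

variable {A : Set V} {y : V} {f : V → ℝ}

theorem moveMass_eq_self (hf : ∀ v ∈ A, f v = 0) : moveMass A y f = f := by
  rw [moveMass, finsum_mem_eq_zero_of_forall_eq_zero hf, Pi.single_zero, add_zero,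
    Set.indicator_eq_self]
  exact fun v hv hvA => hv (hf v hvA)

theorem moveMass_ne_zero {v : V} (hv : moveMass A y f v ≠ 0) :
    (v ∉ A ∧ f v ≠ 0) ∨ v = y := by
  by_cases hvy : v = y
  · exact .inr hvy
  · refine .inl ?_
    simp only [moveMass, Pi.add_apply, Pi.single_apply, hvy, if_false, add_zero] at hv
    exact ⟨fun hvA => hv (Set.indicator_of_notMem (not_not_intro hvA) f),
      fun h0 => hv (by simp [h0])⟩

theorem moveMass_nonneg (hf : ∀ v, 0 ≤ f v) (v : V) : 0 ≤ moveMass A y f v :=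
  add_nonneg (Set.indicator_nonneg (fun v _ => hf v) v)
    (by rw [Pi.single_apply]; split_ifs <;> simp [finsum_nonneg, hf])

theorem sum_moveMass {t : Finset V} (ht : ∀ v ∉ t, f v = 0) (hy : y ∈ t) :
    ∑ v ∈ t, moveMass A y f v = ∑ v ∈ t, f v := by
  rw [moveMass, finsum_mem_eq_sum_indicator ht]
  simp only [Pi.add_apply, sum_add_distrib, sum_pi_single', if_pos hy,
    ← Set.indicator_compl_add_self_apply A f]

theorem SComplex.continuous_moveMass (K : SComplex V) (A : Set V) (y : V) :
    Continuous fun f : geomRealization K => moveMass A y f := by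
  refine continuous_pi fun v => ?_
  simp only [moveMass, Pi.add_apply, Pi.single_apply]
  refine .add ?_ ?_
  · by_cases hv : v ∈ Aᶜ
    · simp only [Set.indicator_of_mem hv]
      exact (continuous_apply v).comp continuous_subtype_val
    · simp only [Set.indicator_of_notMem hv]
      exact continuous_const
  · split_ifs
    · exact K.continuous_finsum_mem A
    · exact continuous_const

end MoveMass

section IndComplex

variable {V : Type*} {G : SimpleGraph V}

theorem segment_subset_geomRealization_indComplex {f g : V → ℝ}
    (hf : f ∈ geomRealization (indComplex G)) (hg : ∀ v, 0 ≤ g v) {t : Finset V}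
    (ht : t ∈ (indComplex G).faces) (hgt : ∀ v ∉ t, g v = 0) (hsum : ∑ v ∈ t, g v = 1)
    (hcross : ∀ u, f u ≠ 0 → ∀ w ∈ t, ¬ G.Adj u w) :
    segment ℝ f g ⊆ geomRealization (indComplex G) := by
  classical
  obtain ⟨s, hs, hsf⟩ := (indComplex G).exists_face_mem_iff_ne_zero hf
  refine (indComplex G).segment_subset_geomRealization hf hg (s := s ∪ t) ?_
    (fun v hv => not_not.1 fun h => hv (mem_union_left _ ((hsf v).2 h)))
    (fun v hv => hgt v fun h => hv (mem_union_right _ h)) ?_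
  · intro a ha b hb
    rcases mem_union.1 ha with ha | ha <;> rcases mem_union.1 hb with hb | hb
    · exact hs a ha b hb
    · exact hcross a ((hsf a).1 ha) b hb
    · exact fun hab => hcross b ((hsf b).1 hb) a ha hab.symm
    · exact ht a ha b hb
  · rwa [← sum_subset subset_union_right fun v _ hv => hgt v hv]

theorem singleton_mem_indComplex_faces (x : V) : {x} ∈ (indComplex G).faces :=
  fun a ha b hb => by
    rw [mem_singleton] at ha hb
    exact ha ▸ hb ▸ G.irrefl

theorem insert_mem_indComplex_faces [DecidableEq V] {s : Finset V} (hs : s ∈ (indComplex G).faces)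
    (hy : ∀ w ∈ s, ¬ G.Adj w y) : insert y s ∈ (indComplex G).faces := by
  intro a ha b hb
  rcases mem_insert.1 ha with ha | ha <;> rcases mem_insert.1 hb with hb | hb
  · exact ha ▸ hb ▸ G.irrefl
  · exact fun hab => hy b hb (ha ▸ hab.symm)
  · exact hb ▸ hy a ha
  · exact hs a ha b hb

theorem segment_single_subset_geomRealization_indComplex [DecidableEq V] {f : V → ℝ} {x : V}
    (hf : f ∈ geomRealization (indComplex G)) (hx : ∀ u, f u ≠ 0 → ¬ G.Adj u x) :
    segment ℝ f (Pi.single x 1) ⊆ geomRealization (indComplex G) :=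
  segment_subset_geomRealization_indComplex hf
    ((indComplex G).single_mem_geomRealization (singleton_mem_indComplex_faces x)).1
    (singleton_mem_indComplex_faces x) (fun v hv => Pi.single_eq_of_ne (by simpa using hv) 1)
    (by simp) fun u hu w hw => mem_singleton.1 hw ▸ hx u hu

end IndComplex

section GenuinePair

variable {V : Type*} {G : SimpleGraph V} {x y : V}

theorem IsGenuinePair.adj_of_adj_of_adj (h : IsGenuinePair G x y)
    (hN : G.neighborSet x ∩ G.neighborSet y = ∅) {u w : V} (hu : G.Adj x u) (hw : G.Adj y w) :
    G.Adj u w := by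
  obtain ⟨hxy, hnxy, hno2K2⟩ := h
  have hdisj : ∀ z, G.Adj x z → G.Adj y z → False := fun z hxz hyz =>
    (Set.eq_empty_iff_forall_notMem.1 hN) z ⟨hxz, hyz⟩
  have hxw : ¬ G.Adj x w := fun hxw => hdisj w hxw hw
  have huy : ¬ G.Adj u y := fun huy => hdisj u hu huy.symm
  by_contra huw
  refine hno2K2 ⟨u, w, ?_, ?_, x, u, y, w, congrArg (insert x) (Set.insert_comm u y {w}),
    hu.ne, hxy, ?_, ?_, ?_, hw.ne, hu, hw, hnxy, hxw, huy, huw⟩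
  · simp only [Set.mem_insert_iff, Set.mem_singleton_iff, not_or]
    exact ⟨hu.ne.symm, fun huy' => hnxy (huy' ▸ hu)⟩
  · simp only [Set.mem_insert_iff, Set.mem_singleton_iff, not_or]
    exact ⟨fun hwx => hnxy (hwx ▸ hw).symm, hw.ne.symm⟩
  · exact fun hxw' => hnxy (hxw' ▸ hw).symm
  · exact fun huy' => hnxy (huy' ▸ hu)
  · exact fun huw' => hdisj u hu (huw' ▸ hw)

theorem IsGenuinePair.segment_moveMass_subset [DecidableEq V] (h : IsGenuinePair G x y)
    (hN : G.neighborSet x ∩ G.neighborSet y = ∅) {f : V → ℝ}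
    (hf : f ∈ geomRealization (indComplex G)) :
    segment ℝ f (moveMass (G.neighborSet x) y f) ⊆ geomRealization (indComplex G) := by
  by_cases hmass : ∀ u ∈ G.neighborSet x, f u = 0
  · rw [moveMass_eq_self hmass, segment_same]
    exact Set.singleton_subset_iff.2 hf
  push Not at hmass
  obtain ⟨u₀, hxu₀, hu₀⟩ := hmass
  obtain ⟨s, hs, hsf⟩ := (indComplex G).exists_face_mem_iff_ne_zero hf
  -- the support of `f` meets `N(x)` at `u₀`, so it avoids `N(y)`
  have hy : ∀ w ∈ s, ¬ G.Adj w y := fun w hw hwy =>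
    hs u₀ ((hsf u₀).2 hu₀) w hw (h.adj_of_adj_of_adj hN hxu₀ hwy.symm)
  have hys : insert y s ∈ (indComplex G).faces := insert_mem_indComplex_faces hs hy
  have hfys : ∀ v ∉ insert y s, f v = 0 := fun v hv =>
    not_not.1 fun hfv => hv (mem_insert_of_mem ((hsf v).2 hfv))
  refine segment_subset_geomRealization_indComplex hf (moveMass_nonneg hf.1) hys
    (fun v hv => not_not.1 fun hv' => hv ?_) ?_
    fun u hu w hw => hys u (mem_insert_of_mem ((hsf u).2 hu)) w hw
  · rcases moveMass_ne_zero hv' with ⟨-, hfv⟩ | rfl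
    · exact mem_insert_of_mem ((hsf v).2 hfv)
    · exact mem_insert_self _ _
  · rw [sum_moveMass hfys (mem_insert_self y s),
      (indComplex G).sum_eq_one_of_mem_geomRealization hf hfys]

end GenuinePair

/-- If `{x,y}` is a genuine pair of `G` with `N_G(x) ∩ N_G(y) = ∅`, then the independence
complex of `G` is contractible. -/
theorem stmt_9 {V : Type*} (G : SimpleGraph V) (x y : V)
    (h : IsGenuinePair G x y) (hN : G.neighborSet x ∩ G.neighborSet y = ∅) :
    ContractibleSpace (geomRealization (indComplex G)) := by
  classical
  set X := geomRealization (indComplex G)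
  have hr : ∀ f ∈ X, moveMass (G.neighborSet x) y f ∈ X := fun f hf =>
    h.segment_moveMass_subset hN hf (right_mem_segment ℝ _ _)
  let r : C(X, X) :=
    ⟨fun f => ⟨_, hr f f.2⟩, ((indComplex G).continuous_moveMass _ y).subtype_mk _⟩
  let δx : X :=
    ⟨_, (indComplex G).single_mem_geomRealization (singleton_mem_indComplex_faces x)⟩
  have hrδ : ∀ f : X, segment ℝ (r f : V → ℝ) δx ⊆ X := fun f =>
    segment_single_subset_geomRealization_indComplex (hr f f.2) fun u hu hux => by
      rcases moveMass_ne_zero hu with ⟨hxu, -⟩ | rfl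
      · exact hxu hux.symm
      · exact h.2.1 hux.symm
  rw [contractible_iff_id_nullhomotopic]
  exact ⟨δx, (ContinuousMap.homotopic_of_segment_subset (.id X) r fun f =>
    h.segment_moveMass_subset hN f.2).trans (ContinuousMap.homotopic_of_segment_subset r _ hrδ)⟩
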